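/- arXiv:2302.01498 — 4 statements merged into one kernel-verified Lean document; each statement's English description precedes it below -/
import Mathlib

section
/- Continuity of integration of conditional kernels (Lemma 2 of the paper, simplified one-step version): let X, Y be Polish metric spaces with fixed basepoints x̄, ȳ, p ≥ 1, and let g : X × Y → ℝ be continuous with |g(x, y)| ≤ C(1 + d(x, x̄)^p + d(y, ȳ)^p). Suppose γ : X → P_p(Y) is a probability kernel that is continuous with respect to the Wasserstein-p metric on P_p(Y), and satisfies ∫ d(y, ȳ)^p γ(dy | x) ≤ C(1 + d(x, x̄)^p). Then x ↦ ∫ g(x, y) γ(dy | x) is continuous and has growth of order p, i.e., is bounded by a constant times 1 + d(x, x̄)^p. -/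
open MeasureTheory Filter Metric Set Topology
open scoped ENNReal BoundedContinuousFunction



lemma aux_tight {Y : Type*} [TopologicalSpace Y] [PolishSpace Y] [MeasurableSpace Y]
    [BorelSpace Y] (μ : Measure Y) [IsProbabilityMeasure μ] {ε : ℝ≥0∞} (hε : 0 < ε) :
    ∃ K : Set Y, IsCompact K ∧ μ Kᶜ < ε := by
  letI := TopologicalSpace.upgradeIsCompletelyMetrizable Y
  haveI : Nonempty Y := by
    by_contra h
    rw [not_nonempty_iff] at h
    have h1 := measure_univ (μ := μ)
    rw [Set.eq_empty_of_isEmpty (Set.univ : Set Y), measure_empty] at h1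
    exact zero_ne_one h1
  obtain ⟨u, hu⟩ := TopologicalSpace.exists_dense_seq Y
  obtain ⟨δ, hδpos, hδsum⟩ := ENNReal.exists_pos_sum_of_countable' hε.ne' ℕ
  set S : ℕ → ℕ → Set Y := fun k N => ⋃ i ∈ Finset.range (N + 1),
    closedBall (u i) (1 / (k + 1)) with hS
  have hSclosed : ∀ k N, IsClosed (S k N) := fun k N =>
    Set.Finite.isClosed_biUnion (Finset.range (N + 1)).finite_toSet
      fun i _ => isClosed_closedBall
  have hSsub : ∀ k, ∀ {a b : ℕ}, a ≤ b → S k a ⊆ S k b := by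
    intro k a b hab
    exact Set.biUnion_subset_biUnion_left (Finset.range_subset_range.2 (by omega))
  have hSiInter : ∀ k, (⋂ N, (S k N)ᶜ) = ∅ := by
    intro k
    rw [← Set.compl_iUnion, Set.compl_empty_iff, Set.iUnion_eq_univ_iff]
    intro y
    have hpos : (0 : ℝ) < 1 / (k + 1) := by positivity
    obtain ⟨i, hi⟩ := Metric.denseRange_iff.1 hu y _ hpos
    exact ⟨i, Set.mem_biUnion (Finset.self_mem_range_succ i) (ball_subset_closedBall hi)⟩
  have hTend : ∀ k, Tendsto (fun N => μ (S k N)ᶜ) atTop (𝓝 0) := by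
    intro k
    have := tendsto_measure_iInter_atTop (μ := μ) (s := fun N => (S k N)ᶜ)
      (fun N => ((hSclosed k N).isOpen_compl.measurableSet).nullMeasurableSet)
      (fun a b hab => Set.compl_subset_compl.2 (hSsub k hab))
      ⟨0, measure_ne_top μ _⟩
    rw [hSiInter k, measure_empty] at this
    exact this
  have hN : ∀ k, ∃ N, μ (S k N)ᶜ < δ k :=
    fun k => ((hTend k).eventually (gt_mem_nhds (hδpos k))).exists
  choose N hNlt using hN
  refine ⟨⋂ k, S k (N k), ?_, ?_⟩
  · apply TotallyBounded.isCompact_of_isClosed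
    · rw [Metric.totallyBounded_iff]
      intro r hr
      obtain ⟨k, hk⟩ := exists_nat_one_div_lt (half_pos hr)
      refine ⟨u '' ↑(Finset.range (N k + 1)),
        (Finset.range (N k + 1)).finite_toSet.image u, ?_⟩
      intro y hy
      have hyS : y ∈ S k (N k) := Set.mem_iInter.1 hy k
      obtain ⟨i, hi, hyi⟩ := Set.mem_iUnion₂.1 hyS
      refine Set.mem_biUnion (Set.mem_image_of_mem u hi) ?_
      have : dist y (u i) ≤ 1 / (k + 1) := Metric.mem_closedBall.1 hyi
      have hk' : (1 : ℝ) / (k + 1) < r / 2 := by exact_mod_cast hk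
      exact Metric.mem_ball.2 (lt_of_le_of_lt this (by linarith))
    · exact isClosed_iInter fun k => hSclosed k (N k)
  · rw [Set.compl_iInter]
    calc μ (⋃ k, (S k (N k))ᶜ) ≤ ∑' k, μ (S k (N k))ᶜ := measure_iUnion_le _
    _ ≤ ∑' k, δ k := ENNReal.tsum_le_tsum fun k => (hNlt k).le
    _ < ε := hδsum


section trunc

variable {R a b t : ℝ}

lemma trunc_abs_le_self (hR : 0 ≤ R) : |max (-R) (min R t)| ≤ |t| := by
  rcases le_total 0 t with h | h
  · have h0 : 0 ≤ min R t := le_min hR h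
    rw [max_eq_right (le_trans (neg_nonpos.2 hR) h0), abs_of_nonneg h0, abs_of_nonneg h]
    exact min_le_right _ _
  · rw [min_eq_right (h.trans hR)]
    have h1 : max (-R) t ≤ 0 := max_le (neg_nonpos.2 hR) h
    rw [abs_of_nonpos h1, abs_of_nonpos h]
    exact neg_le_neg (le_max_right _ _)

lemma trunc_abs_le (hR : 0 ≤ R) : |max (-R) (min R t)| ≤ R := by
  rw [abs_le]
  constructor
  · exact le_max_left _ _
  · exact max_le (by linarith) (min_le_left _ _)

lemma trunc_eq_self (ht : |t| ≤ R) : max (-R) (min R t) = t := by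
  rw [abs_le] at ht
  rw [min_eq_right ht.2, max_eq_right ht.1]

lemma trunc_lipschitz : |max (-R) (min R a) - max (-R) (min R b)| ≤ |a - b| := by
  rw [max_comm (-R) (min R a), max_comm (-R) (min R b)]
  refine le_trans (abs_max_sub_max_le_abs _ _ _) ?_
  have := abs_min_sub_min_le_max R a R b
  simpa using this

lemma trunc_tail_bound {C M κ s : ℝ} (hC : 0 ≤ C) (hM : 1 ≤ M) (hκ : 2 ≤ κ)
    (hs : 0 ≤ s) (hgb : |t| ≤ C * (1 + M + s)) {R : ℝ} (hR : R = C * (1 + M + 2 * κ)) :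
    |t - max (-R) (min R t)| ≤ 2 * C * (2 + M) * (s - min s κ) := by
  rcases le_or_gt s (2 * κ) with h | h
  · have ht : |t| ≤ R := le_trans hgb (by rw [hR]; nlinarith)
    rw [trunc_eq_self ht, sub_self, abs_zero]
    have h3 : min s κ ≤ s := min_le_left _ _
    have := mul_nonneg (mul_nonneg (by linarith : (0:ℝ) ≤ 2 * C) (by linarith : (0:ℝ) ≤ 2 + M))
      (by linarith : (0:ℝ) ≤ s - min s κ)
    linarith
  · have hmin : min s κ = κ := min_eq_right (by linarith)
    rw [hmin]
    have h1 : |t - max (-R) (min R t)| ≤ |t| + |max (-R) (min R t)| := abs_sub _ _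
    have h2 : |max (-R) (min R t)| ≤ |t| :=
      trunc_abs_le_self (by rw [hR]; nlinarith)
    have t1 : 0 ≤ C * ((1 + M) * (s - 2 * κ)) :=
      mul_nonneg hC (mul_nonneg (by linarith) (by linarith))
    have t2 : 0 ≤ C * (M * (κ - 2)) := mul_nonneg hC (mul_nonneg (by linarith) (by linarith))
    have t3 : 0 ≤ C * (M - 1) := mul_nonneg hC (by linarith)
    nlinarith [t1, t2, t3]
end trunc

section main

variable {X Y : Type*}
    [MetricSpace X] [PolishSpace X] [MeasurableSpace X] [BorelSpace X]
    [MetricSpace Y] [PolishSpace Y] [MeasurableSpace Y] [BorelSpace Y]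

lemma aux_s_cont (yb : Y) (p : ℝ) (hp : 1 ≤ p) : Continuous fun y => dist y yb ^ p :=
  (continuous_id.dist continuous_const).rpow_const fun _ => Or.inr (by linarith)

lemma aux_s_int (p : ℝ) (hp : 1 ≤ p) (yb : Y) (ν : Measure Y) [IsProbabilityMeasure ν]
    (hfin : ∫⁻ y, ENNReal.ofReal (dist y yb ^ p) ∂ν ≠ ∞) :
    Integrable (fun y => dist y yb ^ p) ν ∧
      ∫ y, dist y yb ^ p ∂ν = (∫⁻ y, ENNReal.ofReal (dist y yb ^ p) ∂ν).toReal := by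
  have hnn : (0:Y→ℝ) ≤ᵐ[ν] fun y => dist y yb ^ p :=
    Filter.Eventually.of_forall fun y => Real.rpow_nonneg dist_nonneg p
  have hmeas := (aux_s_cont yb p hp).aestronglyMeasurable (μ := ν)
  refine ⟨⟨hmeas, ?_⟩, integral_eq_lintegral_of_nonneg_ae hnn hmeas⟩
  rw [hasFiniteIntegral_iff_ofReal hnn]
  exact hfin.lt_top

lemma aux_g_int (p : ℝ) (hp : 1 ≤ p) (xb : X) (yb : Y) (C : ℝ) (hC : 0 ≤ C)
    (g : X → Y → ℝ) (hgc : Continuous fun q : X × Y => g q.1 q.2)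
    (hg : ∀ x y, |g x y| ≤ C * (1 + dist x xb ^ p + dist y yb ^ p))
    (x' : X) (ν : Measure Y) [IsProbabilityMeasure ν]
    (hsint : Integrable (fun y => dist y yb ^ p) ν) :
    Integrable (fun y => g x' y) ν := by
  have hcont : Continuous fun y => g x' y := hgc.comp (Continuous.prodMk_right x')
  refine Integrable.mono' ((integrable_const (C * (1 + dist x' xb ^ p))).add
    (hsint.const_mul C)) hcont.aestronglyMeasurable ?_
  refine Filter.Eventually.of_forall fun y => ?_
  simp only [Pi.add_apply, Real.norm_eq_abs]
  have := hg x' y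
  ring_nf
  ring_nf at this
  linarith

end main

section mainwork

variable {X Y : Type*}
    [MetricSpace X] [PolishSpace X] [MeasurableSpace X] [BorelSpace X]
    [MetricSpace Y] [PolishSpace Y] [MeasurableSpace Y] [BorelSpace Y]

lemma aux_seq (p : ℝ) (hp : 1 ≤ p) (xb : X) (yb : Y) (C : ℝ) (hC : 0 ≤ C)
    (g : X → Y → ℝ) (hgc : Continuous fun q : X × Y => g q.1 q.2)
    (hg : ∀ x y, |g x y| ≤ C * (1 + dist x xb ^ p + dist y yb ^ p))
    (γ : X → ProbabilityMeasure Y)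
    (hmom : ∀ x, ∫⁻ y, ENNReal.ofReal (dist y yb ^ p) ∂(γ x).toMeasure
      ≤ ENNReal.ofReal (C * (1 + dist x xb ^ p)))
    (x : X) (xs : ℕ → X) (hxs : Tendsto xs atTop (𝓝 x))
    (hweak : Tendsto (fun n => γ (xs n)) atTop (𝓝 (γ x)))
    (hmomt : Tendsto (fun n => ∫⁻ y, ENNReal.ofReal (dist y yb ^ p) ∂(γ (xs n)).toMeasure) atTop
      (𝓝 (∫⁻ y, ENNReal.ofReal (dist y yb ^ p) ∂(γ x).toMeasure))) :
    Tendsto (fun n => ∫ y, g (xs n) y ∂(γ (xs n)).toMeasure) atTop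
      (𝓝 (∫ y, g x y ∂(γ x).toMeasure)) := by
  set s : Y → ℝ := fun y => dist y yb ^ p with hs_def
  have hscont : Continuous s := aux_s_cont yb p hp
  have hsnn : ∀ y, 0 ≤ s y := fun y => Real.rpow_nonneg dist_nonneg p
  have hfin : ∀ x', ∫⁻ y, ENNReal.ofReal (s y) ∂(γ x').toMeasure ≠ ∞ :=
    fun x' => ((hmom x').trans_lt ENNReal.ofReal_lt_top).ne
  have hsint : ∀ x', Integrable s (γ x').toMeasure :=
    fun x' => (aux_s_int p hp yb _ (hfin x')).1
  have hsval : ∀ x', ∫ y, s y ∂(γ x').toMeasure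
      = (∫⁻ y, ENNReal.ofReal (s y) ∂(γ x').toMeasure).toReal :=
    fun x' => (aux_s_int p hp yb _ (hfin x')).2
  have hgint : ∀ x', Integrable (fun y => g x' y) (γ x').toMeasure :=
    fun x' => aux_g_int p hp xb yb C hC g hgc hg x' _ (hsint x')
  have hwk := ProbabilityMeasure.tendsto_iff_forall_integral_tendsto.mp hweak
  -- real convergence of moments
  have hmomR : Tendsto (fun n => ∫ y, s y ∂(γ (xs n)).toMeasure) atTop
      (𝓝 (∫ y, s y ∂(γ x).toMeasure)) := by
    have h1 := (ENNReal.tendsto_toReal (hfin x)).comp hmomt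
    rw [hsval x]
    exact Tendsto.congr (fun n => (hsval (xs n)).symm) h1
  -- uniform bound on p-th powers of distances of the base points
  have hdist : Tendsto (fun n => dist (xs n) xb) atTop (𝓝 (dist x xb)) :=
    hxs.dist tendsto_const_nhds
  obtain ⟨B, hB⟩ := hdist.bddAbove_range
  set M : ℝ := max 1 (max B (dist x xb) ^ p) with hM_def
  have hM1 : 1 ≤ M := le_max_left _ _
  have hMx : dist x xb ^ p ≤ M :=
    le_trans (Real.rpow_le_rpow dist_nonneg (le_max_right _ _) (by linarith)) (le_max_right 1 _)
  have hMn : ∀ n, dist (xs n) xb ^ p ≤ M := fun n =>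
    le_trans (Real.rpow_le_rpow dist_nonneg
      (le_trans (hB (Set.mem_range_self n)) (le_max_left _ _)) (by linarith)) (le_max_right 1 _)
  set D : ℝ := 2 * C * (2 + M) with hD_def
  have hD0 : 0 ≤ D := mul_nonneg (by linarith) (by linarith)
  -- the key quantitative estimate
  have key : ∀ ε : ℝ, 0 < ε → ∀ᶠ n in atTop,
      |(∫ y, g (xs n) y ∂(γ (xs n)).toMeasure) - ∫ y, g x y ∂(γ x).toMeasure|
        ≤ (2 * D + 3) * ε := by
    intro ε hε
    -- choose the uniform-integrability truncation level κ
    have hφtend : Tendsto (fun j : ℕ => ∫ y, min (s y) j ∂(γ x).toMeasure) atTop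
        (𝓝 (∫ y, s y ∂(γ x).toMeasure)) := by
      refine tendsto_integral_of_dominated_convergence s
        (fun j => (hscont.min continuous_const).aestronglyMeasurable) (hsint x)
        (fun j => Filter.Eventually.of_forall fun y => ?_)
        (Filter.Eventually.of_forall fun y => ?_)
      · rw [Real.norm_eq_abs, abs_of_nonneg (le_min (hsnn y) (by positivity))]
        exact min_le_left _ _
      · refine Tendsto.congr' ?_ (tendsto_const_nhds (x := s y))
        filter_upwards [eventually_ge_atTop ⌈s y⌉₊] with j hj
        exact (min_eq_left (le_trans (Nat.le_ceil _) (by exact_mod_cast hj))).symm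
    obtain ⟨j, hjUI, hj2⟩ :=
      ((hφtend.eventually_const_lt (by linarith : (∫ y, s y ∂(γ x).toMeasure) - ε
          < ∫ y, s y ∂(γ x).toMeasure)).and (eventually_ge_atTop 2)).exists
    set κ : ℝ := (j : ℝ) with hκ_def
    have hκ2 : (2:ℝ) ≤ κ := by rw [hκ_def]; exact_mod_cast hj2
    set φ : Y → ℝ := fun y => min (s y) κ with hφ_def
    have hφnn : ∀ y, 0 ≤ φ y := fun y => le_min (hsnn y) (by linarith)
    set Φ : Y →ᵇ ℝ := BoundedContinuousFunction.ofNormedAddCommGroup φ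
      (hscont.min continuous_const) κ
      (fun y => by
        rw [Real.norm_eq_abs, abs_of_nonneg (hφnn y)]; exact min_le_right _ _) with hΦ_def
    have hΦint : ∀ x', Integrable φ (γ x').toMeasure := fun x' => Φ.integrable _
    have hUIinfty : (∫ y, s y ∂(γ x).toMeasure) - (∫ y, φ y ∂(γ x).toMeasure) < ε := by
      have : (∫ y, s y ∂(γ x).toMeasure) - ε < ∫ y, φ y ∂(γ x).toMeasure := hjUI
      linarith
    have hΦtend : Tendsto (fun n => ∫ y, φ y ∂(γ (xs n)).toMeasure) atTop
        (𝓝 (∫ y, φ y ∂(γ x).toMeasure)) := hwk Φ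
    have hUIn : ∀ᶠ n in atTop,
        (∫ y, s y ∂(γ (xs n)).toMeasure) - (∫ y, φ y ∂(γ (xs n)).toMeasure) < ε :=
      (hmomR.sub hΦtend).eventually_lt_const hUIinfty
    -- truncation of g
    set R : ℝ := C * (1 + M + 2 * κ) with hR_def
    have hR0 : 0 ≤ R := mul_nonneg hC (by linarith)
    set GR : X → Y →ᵇ ℝ := fun x' => BoundedContinuousFunction.ofNormedAddCommGroup
      (fun y => max (-R) (min R (g x' y)))
      (continuous_const.max (continuous_const.min (hgc.comp (Continuous.prodMk_right x')))) R
      (fun y => by rw [Real.norm_eq_abs]; exact trunc_abs_le hR0) with hGR_def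
    -- weak convergence term
    have hB2 : ∀ᶠ n in atTop,
        |(∫ y, GR x y ∂(γ (xs n)).toMeasure) - ∫ y, GR x y ∂(γ x).toMeasure| < ε := by
      have := Metric.tendsto_nhds.1 (hwk (GR x)) ε hε
      filter_upwards [this] with n hn
      rwa [Real.dist_eq] at hn
    -- tight compact set
    set ε₂ : ℝ := ε / (4 * R + 4) with hε₂_def
    have hε₂ : 0 < ε₂ := div_pos hε (by linarith)
    obtain ⟨K₀, hK₀c, hK₀m⟩ := aux_tight (γ x).toMeasure (ENNReal.ofReal_pos.2 hε₂)
    set K : Set Y := K₀ ∪ {yb} with hK_def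
    have hKc : IsCompact K := hK₀c.union isCompact_singleton
    have hKne : K.Nonempty := ⟨yb, Or.inr rfl⟩
    have hKm : (γ x).toMeasure Kᶜ < ENNReal.ofReal ε₂ :=
      lt_of_le_of_lt (measure_mono (compl_subset_compl.2 subset_union_left)) hK₀m
    have hKmr : ((γ x).toMeasure Kᶜ).toReal < ε₂ :=
      (ENNReal.lt_ofReal_iff_toReal_lt (measure_ne_top _ _)).1 hKm
    -- tube lemma
    have hUopen : IsOpen {q : X × Y | |g q.1 q.2 - g x q.2| < ε} := by
      have hcont2 : Continuous fun q : X × Y => |g q.1 q.2 - g x q.2| :=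
        (hgc.sub (hgc.comp ((continuous_const : Continuous fun _ : X × Y => x).prodMk
          continuous_snd))).abs
      exact isOpen_lt hcont2 continuous_const
    have hsubU : ({x} : Set X) ×ˢ K ⊆ {q : X × Y | |g q.1 q.2 - g x q.2| < ε} := by
      rintro ⟨x', y'⟩ ⟨hx', _⟩
      rcases hx' with rfl
      simpa using hε
    obtain ⟨V, W, hVopen, hWopen, hxV, hKW, hVW⟩ :=
      generalized_tube_lemma isCompact_singleton hKc hUopen hsubU
    obtain ⟨η, hη, hthick⟩ := hKc.exists_thickening_subset_open hWopen hKW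
    obtain ⟨r, hr, hball⟩ := Metric.isOpen_iff.1 hVopen x (hxV rfl)
    -- the cutoff function
    set ψ : Y → ℝ := fun y => min 1 (infDist y K * (2 / η)) with hψ_def
    have hψnn : ∀ y, 0 ≤ ψ y := fun y =>
      le_min zero_le_one (mul_nonneg infDist_nonneg (by positivity))
    set Ψ : Y →ᵇ ℝ := BoundedContinuousFunction.ofNormedAddCommGroup ψ
      (continuous_const.min ((continuous_infDist_pt K).mul continuous_const)) 1
      (fun y => by
        rw [Real.norm_eq_abs, abs_of_nonneg (hψnn y)]; exact min_le_left _ _) with hΨ_def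
    have hψint : ∀ x', Integrable ψ (γ x').toMeasure := fun x' => Ψ.integrable _
    have hψinfty : ∫ y, ψ y ∂(γ x).toMeasure ≤ ε₂ := by
      have hind : Integrable (Kᶜ.indicator fun _ => (1:ℝ)) (γ x).toMeasure :=
        (integrable_indicator_iff hKc.isClosed.measurableSet.compl).2
          (integrable_const _).integrableOn
      have h1 : ∫ y, ψ y ∂(γ x).toMeasure
          ≤ ∫ y, Kᶜ.indicator (fun _ => (1:ℝ)) y ∂(γ x).toMeasure := by
        refine integral_mono (hψint x) hind fun y => ?_
        by_cases hy : y ∈ K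
        · have : ψ y = 0 := by
            simp [hψ_def, infDist_zero_of_mem hy]
          rw [this, Set.indicator_of_notMem (by simpa using hy)]
        · rw [Set.indicator_of_mem (by simpa using hy)]
          exact min_le_left _ _
      rw [integral_indicator_const (1:ℝ) hKc.isClosed.measurableSet.compl, smul_eq_mul,
        mul_one] at h1
      have hre : ((γ x).toMeasure).real Kᶜ = ((γ x).toMeasure Kᶜ).toReal := rfl
      linarith
    have hψn : ∀ᶠ n in atTop, ∫ y, ψ y ∂(γ (xs n)).toMeasure < 2 * ε₂ := by
      have hΨeq : ∫ ω, Ψ ω ∂(γ x).toMeasure = ∫ y, ψ y ∂(γ x).toMeasure := rfl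
      have h := (hwk Ψ).eventually_lt_const (show _ < 2 * ε₂ by rw [hΨeq]; linarith)
      filter_upwards [h] with n hn
      exact hn
    -- pointwise tube estimate
    have hptw : ∀ n, xs n ∈ ball x r → ∀ y,
        |GR (xs n) y - GR x y| ≤ ε + 2 * R * ψ y := by
      intro n hn y
      rcases lt_or_ge (infDist y K) (η / 2) with hcase | hcase
      · have hyW : y ∈ W := hthick ((mem_thickening_iff_infDist_lt hKne).2 (by linarith))
        have hmem : ((xs n, y) : X × Y) ∈ {q : X × Y | |g q.1 q.2 - g x q.2| < ε} :=
          hVW ⟨hball hn, hyW⟩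
        have h1 : |GR (xs n) y - GR x y| ≤ |g (xs n) y - g x y| := trunc_lipschitz
        have h2 : |g (xs n) y - g x y| < ε := hmem
        have h3 : 0 ≤ 2 * R * ψ y := mul_nonneg (by linarith) (hψnn y)
        linarith
      · have hψy : ψ y = 1 := by
          have h4 : (0:ℝ) < 2 / η := by positivity
          have h5 : (η / 2) * (2 / η) ≤ infDist y K * (2 / η) :=
            mul_le_mul_of_nonneg_right hcase h4.le
          have h6 : (η / 2) * (2 / η) = 1 := by field_simp
          exact min_eq_left (by rw [← h6]; exact h5)
        have h1 : |GR (xs n) y| ≤ R := trunc_abs_le hR0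
        have h2 : |GR x y| ≤ R := trunc_abs_le hR0
        have h3 : |GR (xs n) y - GR x y| ≤ |GR (xs n) y| + |GR x y| := abs_sub _ _
        rw [hψy]
        linarith
    -- tail estimate
    have htail : ∀ x', dist x' xb ^ p ≤ M →
        |(∫ y, g x' y ∂(γ x').toMeasure) - ∫ y, GR x' y ∂(γ x').toMeasure|
          ≤ D * ((∫ y, s y ∂(γ x').toMeasure) - ∫ y, φ y ∂(γ x').toMeasure) := by
      intro x' hx'
      rw [← integral_sub (hgint x') ((GR x').integrable _), ← Real.norm_eq_abs]
      refine le_trans (norm_integral_le_integral_norm _) ?_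
      have hmono : ∫ y, ‖g x' y - GR x' y‖ ∂(γ x').toMeasure
          ≤ ∫ y, D * (s y - φ y) ∂(γ x').toMeasure := by
        refine integral_mono ((hgint x').sub ((GR x').integrable _)).norm
          (((hsint x').sub (hΦint x')).const_mul D) fun y => ?_
        rw [Real.norm_eq_abs]
        exact trunc_tail_bound hC hM1 hκ2 (hsnn y)
          (le_trans (hg x' y) (mul_le_mul_of_nonneg_left (by linarith) hC)) hR_def
      refine hmono.trans ?_
      rw [integral_const_mul, integral_sub (hsint x') (hΦint x')]
    -- eventual membership in the ball
    have hballn : ∀ᶠ n in atTop, xs n ∈ ball x r := hxs (Metric.ball_mem_nhds x hr)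
    -- assemble
    filter_upwards [hballn, hUIn, hB2, hψn] with n h1 h2 h3 h4
    have hT1 : |(∫ y, g (xs n) y ∂(γ (xs n)).toMeasure)
        - ∫ y, GR (xs n) y ∂(γ (xs n)).toMeasure| ≤ D * ε := by
      refine le_trans (htail (xs n) (hMn n)) ?_
      exact mul_le_mul_of_nonneg_left h2.le hD0
    have hT4 : |(∫ y, GR x y ∂(γ x).toMeasure) - ∫ y, g x y ∂(γ x).toMeasure| ≤ D * ε := by
      rw [abs_sub_comm]
      refine le_trans (htail x hMx) ?_
      exact mul_le_mul_of_nonneg_left hUIinfty.le hD0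
    have hT2 : |(∫ y, GR (xs n) y ∂(γ (xs n)).toMeasure)
        - ∫ y, GR x y ∂(γ (xs n)).toMeasure| ≤ 2 * ε := by
      rw [← integral_sub ((GR (xs n)).integrable _) ((GR x).integrable _), ← Real.norm_eq_abs]
      refine le_trans (norm_integral_le_integral_norm _) ?_
      have hmono : ∫ y, ‖GR (xs n) y - GR x y‖ ∂(γ (xs n)).toMeasure
          ≤ ∫ y, (ε + 2 * R * ψ y) ∂(γ (xs n)).toMeasure := by
        refine integral_mono (((GR (xs n)).integrable _).sub ((GR x).integrable _)).norm
          ((integrable_const ε).add ((hψint (xs n)).const_mul (2 * R))) fun y => ?_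
        rw [Real.norm_eq_abs]
        exact hptw n h1 y
      refine hmono.trans ?_
      rw [integral_add (integrable_const ε) ((hψint (xs n)).const_mul (2 * R)),
        integral_const, integral_const_mul]
      simp only [probReal_univ, smul_eq_mul, one_mul]
      have h5 : 2 * R * ∫ y, ψ y ∂(γ (xs n)).toMeasure ≤ 2 * R * (2 * ε₂) :=
        mul_le_mul_of_nonneg_left h4.le (by linarith)
      have h6 : 4 * R * ε₂ ≤ ε := by
        rw [hε₂_def]
        calc 4 * R * (ε / (4 * R + 4)) = ε * (4 * R / (4 * R + 4)) := by ring
        _ ≤ ε * 1 := mul_le_mul_of_nonneg_left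
            ((div_le_one (by linarith)).2 (by linarith)) hε.le
        _ = ε := mul_one ε
      linarith
    calc |(∫ y, g (xs n) y ∂(γ (xs n)).toMeasure) - ∫ y, g x y ∂(γ x).toMeasure|
        ≤ |(∫ y, g (xs n) y ∂(γ (xs n)).toMeasure)
            - ∫ y, GR (xs n) y ∂(γ (xs n)).toMeasure|
          + |(∫ y, GR (xs n) y ∂(γ (xs n)).toMeasure) - ∫ y, g x y ∂(γ x).toMeasure| :=
        abs_sub_le _ _ _
      _ ≤ |(∫ y, g (xs n) y ∂(γ (xs n)).toMeasure)
            - ∫ y, GR (xs n) y ∂(γ (xs n)).toMeasure|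
          + (|(∫ y, GR (xs n) y ∂(γ (xs n)).toMeasure) - ∫ y, GR x y ∂(γ (xs n)).toMeasure|
            + |(∫ y, GR x y ∂(γ (xs n)).toMeasure) - ∫ y, g x y ∂(γ x).toMeasure|) := by
        have := abs_sub_le (∫ y, GR (xs n) y ∂(γ (xs n)).toMeasure)
          (∫ y, GR x y ∂(γ (xs n)).toMeasure) (∫ y, g x y ∂(γ x).toMeasure)
        linarith
      _ ≤ |(∫ y, g (xs n) y ∂(γ (xs n)).toMeasure)
            - ∫ y, GR (xs n) y ∂(γ (xs n)).toMeasure|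
          + (|(∫ y, GR (xs n) y ∂(γ (xs n)).toMeasure) - ∫ y, GR x y ∂(γ (xs n)).toMeasure|
            + (|(∫ y, GR x y ∂(γ (xs n)).toMeasure) - ∫ y, GR x y ∂(γ x).toMeasure|
              + |(∫ y, GR x y ∂(γ x).toMeasure) - ∫ y, g x y ∂(γ x).toMeasure|)) := by
        have := abs_sub_le (∫ y, GR x y ∂(γ (xs n)).toMeasure)
          (∫ y, GR x y ∂(γ x).toMeasure) (∫ y, g x y ∂(γ x).toMeasure)
        linarith
      _ ≤ D * ε + (2 * ε + (ε + D * ε)) := by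
        exact add_le_add hT1 (add_le_add hT2 (add_le_add h3.le hT4))
      _ = (2 * D + 3) * ε := by ring
  -- conclude
  refine Metric.tendsto_nhds.2 fun ε₀ hε₀ => ?_
  have hε' : 0 < ε₀ / (2 * D + 4) := div_pos hε₀ (by linarith)
  filter_upwards [key _ hε'] with n hn
  rw [Real.dist_eq]
  have h1 : (2 * D + 3) * (ε₀ / (2 * D + 4)) < (2 * D + 4) * (ε₀ / (2 * D + 4)) :=
    mul_lt_mul_of_pos_right (by linarith) hε'
  have h2 : (2 * D + 4) * (ε₀ / (2 * D + 4)) = ε₀ :=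
    mul_div_cancel₀ ε₀ (by linarith)
  linarith


end mainwork

/-- Continuity of integration of conditional kernels (one-step version):
if g is continuous with growth of order p, and the kernel γ : X → P_p(Y) is continuous in
the Wasserstein-p sense (weak convergence plus convergence of p-th moments, which is
equivalent to W_p convergence) and has p-th moments of p-growth, then
x ↦ ∫ g(x, y) γ(dy | x) is continuous and has growth of order p. -/
theorem stmt_6 {X Y : Type*}
    [MetricSpace X] [PolishSpace X] [MeasurableSpace X] [BorelSpace X]
    [MetricSpace Y] [PolishSpace Y] [MeasurableSpace Y] [BorelSpace Y]
    (p : ℝ) (hp : 1 ≤ p) (xb : X) (yb : Y) (C : ℝ) (hC : 0 ≤ C)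
    (g : X → Y → ℝ)
    (hgc : Continuous fun q : X × Y => g q.1 q.2)
    (hg : ∀ x y, |g x y| ≤ C * (1 + dist x xb ^ p + dist y yb ^ p))
    (γ : X → ProbabilityMeasure Y)
    (hmom : ∀ x, ∫⁻ y, ENNReal.ofReal (dist y yb ^ p) ∂(γ x).toMeasure
      ≤ ENNReal.ofReal (C * (1 + dist x xb ^ p)))
    (hcont : ∀ (x : X) (xs : ℕ → X), Tendsto xs atTop (nhds x) →
      Tendsto (fun n => γ (xs n)) atTop (nhds (γ x)) ∧
      Tendsto (fun n => ∫⁻ y, ENNReal.ofReal (dist y yb ^ p) ∂(γ (xs n)).toMeasure) atTop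
        (nhds (∫⁻ y, ENNReal.ofReal (dist y yb ^ p) ∂(γ x).toMeasure))) :
    Continuous (fun x => ∫ y, g x y ∂(γ x).toMeasure) ∧
    ∃ C' : ℝ, 0 ≤ C' ∧ ∀ x, |∫ y, g x y ∂(γ x).toMeasure| ≤ C' * (1 + dist x xb ^ p) := by
  constructor
  · rw [continuous_iff_seqContinuous]
    intro xs x hxs
    obtain ⟨hweak, hmomt⟩ := hcont x xs hxs
    exact aux_seq p hp xb yb C hC g hgc hg γ hmom x xs hxs hweak hmomt
  · refine ⟨C + C * C, by positivity, fun x => ?_⟩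
    have hfin : ∫⁻ y, ENNReal.ofReal (dist y yb ^ p) ∂(γ x).toMeasure ≠ ∞ :=
      ((hmom x).trans_lt ENNReal.ofReal_lt_top).ne
    obtain ⟨hsint, hsval⟩ := aux_s_int p hp yb (γ x).toMeasure hfin
    have hgint := aux_g_int p hp xb yb C hC g hgc hg x (γ x).toMeasure hsint
    have hdp : (0:ℝ) ≤ dist x xb ^ p := Real.rpow_nonneg dist_nonneg p
    have hmomR : ∫ y, dist y yb ^ p ∂(γ x).toMeasure ≤ C * (1 + dist x xb ^ p) := by
      rw [hsval]
      exact ENNReal.toReal_le_of_le_ofReal (mul_nonneg hC (by linarith)) (hmom x)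
    rw [← Real.norm_eq_abs]
    refine le_trans (norm_integral_le_integral_norm _) ?_
    have h1 : ∫ y, ‖g x y‖ ∂(γ x).toMeasure
        ≤ ∫ y, (C * (1 + dist x xb ^ p) + C * dist y yb ^ p) ∂(γ x).toMeasure := by
      refine integral_mono hgint.norm ((integrable_const _).add (hsint.const_mul C)) fun y => ?_
      rw [Real.norm_eq_abs]
      have := hg x y
      ring_nf
      ring_nf at this
      linarith
    refine h1.trans ?_
    rw [integral_add (integrable_const _) (hsint.const_mul C), integral_const,
      integral_const_mul]
    simp only [probReal_univ, smul_eq_mul, one_mul]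
    have h2 : C * ∫ y, dist y yb ^ p ∂(γ x).toMeasure ≤ C * (C * (1 + dist x xb ^ p)) :=
      mul_le_mul_of_nonneg_left hmomR hC
    nlinarith
end

section
/- Characterization of bi-causal plans via successive kernels (two-period discrete case): let X₁, X₂, Y₁, Y₂ be finite sets, μ a probability measure on X₁ × X₂, ν on Y₁ × Y₂. A probability measure π on (X₁ × X₂) × (Y₁ × Y₂) with marginals μ and ν is bi-causal (i.e., under π, y₁ is conditionally independent of x₂ given x₁, and x₁ is conditionally independent of y₂ given y₁) if and only if its first-stage marginal π₁ lies in Π(μ₁, ν₁) and, for π-almost every (x₁, y₁), the conditional law π(x₂, y₂ | x₁, y₁) lies in Π(μ(x₂ | x₁), ν(y₂ | y₁)), where μ₁, ν₁ are the first-coordinate marginals and μ(· | x₁), ν(· | y₁) the conditional laws. -/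
open Finset

/-- Characterization of bi-causal plans via successive kernels (two-period
discrete case): a coupling π of μ and ν is bi-causal (y₁ ⊥ x₂ | x₁ and x₁ ⊥ y₂ | y₁)
if and only if its first-stage marginal is a coupling of the first-stage marginals of μ
and ν and, for every first-stage pair of positive probability, the conditional law of the
second stage is a coupling of the conditional laws μ(·|x₁) and ν(·|y₁). -/
theorem stmt_14 {X₁ X₂ Y₁ Y₂ : Type*} [Fintype X₁] [Fintype X₂] [Fintype Y₁] [Fintype Y₂]
    (π : (X₁ × X₂) × (Y₁ × Y₂) → ℝ) (μ : X₁ × X₂ → ℝ) (ν : Y₁ × Y₂ → ℝ)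
    (hπ0 : ∀ ω, 0 ≤ π ω) (hπ1 : ∑ ω, π ω = 1)
    (hmargX : ∀ x : X₁ × X₂, ∑ y : Y₁ × Y₂, π (x, y) = μ x)
    (hmargY : ∀ y : Y₁ × Y₂, ∑ x : X₁ × X₂, π (x, y) = ν y) :
    -- bi-causality: π(y₁ | x₁, x₂) = π(y₁ | x₁) and π(x₁ | y₁, y₂) = π(x₁ | y₁)
    ((∀ x₁ x₂ y₁, μ (x₁, x₂) ≠ 0 →
        (∑ y₂ : Y₂, π ((x₁, x₂), (y₁, y₂))) / μ (x₁, x₂)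
          = (∑ x₂' : X₂, ∑ y₂ : Y₂, π ((x₁, x₂'), (y₁, y₂))) / (∑ x₂' : X₂, μ (x₁, x₂'))) ∧
     (∀ y₁ y₂ x₁, ν (y₁, y₂) ≠ 0 →
        (∑ x₂ : X₂, π ((x₁, x₂), (y₁, y₂))) / ν (y₁, y₂)
          = (∑ y₂' : Y₂, ∑ x₂ : X₂, π ((x₁, x₂), (y₁, y₂'))) / (∑ y₂' : Y₂, ν (y₁, y₂'))))
    ↔
    -- first-stage marginal is a coupling of μ₁ and ν₁ ...
    ((∀ x₁, ∑ y₁ : Y₁, (∑ x₂ : X₂, ∑ y₂ : Y₂, π ((x₁, x₂), (y₁, y₂)))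
        = ∑ x₂ : X₂, μ (x₁, x₂)) ∧
     (∀ y₁, ∑ x₁ : X₁, (∑ x₂ : X₂, ∑ y₂ : Y₂, π ((x₁, x₂), (y₁, y₂)))
        = ∑ y₂ : Y₂, ν (y₁, y₂)) ∧
     -- ... and for π-a.e. (x₁, y₁), the conditional second-stage law is a coupling of
     -- μ(·|x₁) and ν(·|y₁)
     (∀ x₁ y₁, (∑ x₂ : X₂, ∑ y₂ : Y₂, π ((x₁, x₂), (y₁, y₂))) ≠ 0 →
       (∀ x₂, (∑ y₂ : Y₂, π ((x₁, x₂), (y₁, y₂)) /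
            (∑ x₂' : X₂, ∑ y₂' : Y₂, π ((x₁, x₂'), (y₁, y₂'))))
          = μ (x₁, x₂) / (∑ x₂' : X₂, μ (x₁, x₂'))) ∧
       (∀ y₂, (∑ x₂ : X₂, π ((x₁, x₂), (y₁, y₂)) /
            (∑ x₂' : X₂, ∑ y₂' : Y₂, π ((x₁, x₂'), (y₁, y₂'))))
          = ν (y₁, y₂) / (∑ y₂' : Y₂, ν (y₁, y₂'))))) := by
  have hμ0 : ∀ x, 0 ≤ μ x := fun x => (hmargX x) ▸ Finset.sum_nonneg fun _ _ => hπ0 _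
  have hν0 : ∀ y, 0 ≤ ν y := fun y => (hmargY y) ▸ Finset.sum_nonneg fun _ _ => hπ0 _
  have hA0 : ∀ x₁ x₂ y₁, 0 ≤ ∑ y₂ : Y₂, π ((x₁, x₂), (y₁, y₂)) :=
    fun _ _ _ => Finset.sum_nonneg fun _ _ => hπ0 _
  have hB0 : ∀ x₁ y₁ y₂, 0 ≤ ∑ x₂ : X₂, π ((x₁, x₂), (y₁, y₂)) :=
    fun _ _ _ => Finset.sum_nonneg fun _ _ => hπ0 _
  have hS0 : ∀ x₁ y₁, 0 ≤ ∑ x₂ : X₂, ∑ y₂ : Y₂, π ((x₁, x₂), (y₁, y₂)) :=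
    fun x₁ y₁ => Finset.sum_nonneg fun x₂ _ => hA0 x₁ x₂ y₁
  have hScomm : ∀ x₁ y₁, (∑ x₂ : X₂, ∑ y₂ : Y₂, π ((x₁, x₂), (y₁, y₂)))
      = ∑ y₂ : Y₂, ∑ x₂ : X₂, π ((x₁, x₂), (y₁, y₂)) := fun _ _ => Finset.sum_comm
  have hAμ : ∀ x₁ x₂ y₁, (∑ y₂ : Y₂, π ((x₁, x₂), (y₁, y₂))) ≤ μ (x₁, x₂) := by
    intro x₁ x₂ y₁
    rw [← hmargX (x₁, x₂), Fintype.sum_prod_type]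
    exact Finset.single_le_sum (f := fun y₁' => ∑ y₂ : Y₂, π ((x₁, x₂), (y₁', y₂)))
      (fun i _ => hA0 x₁ x₂ i) (Finset.mem_univ y₁)
  have hBν : ∀ x₁ y₁ y₂, (∑ x₂ : X₂, π ((x₁, x₂), (y₁, y₂))) ≤ ν (y₁, y₂) := by
    intro x₁ y₁ y₂
    rw [← hmargY (y₁, y₂), Fintype.sum_prod_type]
    exact Finset.single_le_sum (f := fun x₁' => ∑ x₂ : X₂, π ((x₁', x₂), (y₁, y₂)))
      (fun i _ => hB0 i y₁ y₂) (Finset.mem_univ x₁)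
  have hAS : ∀ x₁ x₂ y₁, (∑ y₂ : Y₂, π ((x₁, x₂), (y₁, y₂)))
      ≤ ∑ x₂' : X₂, ∑ y₂ : Y₂, π ((x₁, x₂'), (y₁, y₂)) :=
    fun x₁ x₂ y₁ => Finset.single_le_sum (fun i _ => hA0 x₁ i y₁) (Finset.mem_univ x₂)
  have hBS : ∀ x₁ y₁ y₂, (∑ x₂ : X₂, π ((x₁, x₂), (y₁, y₂)))
      ≤ ∑ x₂' : X₂, ∑ y₂' : Y₂, π ((x₁, x₂'), (y₁, y₂')) := by
    intro x₁ y₁ y₂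
    rw [hScomm]
    exact Finset.single_le_sum (fun i _ => hB0 x₁ y₁ i) (Finset.mem_univ y₂)
  have hμ₁ : ∀ x₁ x₂, μ (x₁, x₂) ≤ ∑ x₂' : X₂, μ (x₁, x₂') :=
    fun x₁ x₂ => Finset.single_le_sum (fun i _ => hμ0 (x₁, i)) (Finset.mem_univ x₂)
  have hν₁ : ∀ y₁ y₂, ν (y₁, y₂) ≤ ∑ y₂' : Y₂, ν (y₁, y₂') :=
    fun y₁ y₂ => Finset.single_le_sum (fun i _ => hν0 (y₁, i)) (Finset.mem_univ y₂)
  constructor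
  · rintro ⟨hC1, hC2⟩
    refine ⟨?_, ?_, ?_⟩
    · intro x₁
      rw [Finset.sum_comm]
      exact Finset.sum_congr rfl fun x₂ _ => by rw [← hmargX (x₁, x₂), Fintype.sum_prod_type]
    · intro y₁
      simp_rw [hScomm]
      rw [Finset.sum_comm]
      exact Finset.sum_congr rfl fun y₂ _ => by rw [← hmargY (y₁, y₂), Fintype.sum_prod_type]
    · intro x₁ y₁ hS
      constructor
      · intro x₂
        rw [← Finset.sum_div]
        by_cases hμx : μ (x₁, x₂) = 0
        · have hA : (∑ y₂ : Y₂, π ((x₁, x₂), (y₁, y₂))) = 0 :=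
            le_antisymm (hμx ▸ hAμ x₁ x₂ y₁) (hA0 x₁ x₂ y₁)
          rw [hA, hμx, zero_div, zero_div]
        · have h1 := hC1 x₁ x₂ y₁ hμx
          have hμpos : 0 < μ (x₁, x₂) := lt_of_le_of_ne (hμ0 _) (Ne.symm hμx)
          have hμ₁pos : 0 < ∑ x₂' : X₂, μ (x₁, x₂') := lt_of_lt_of_le hμpos (hμ₁ x₁ x₂)
          field_simp [hμx, hS, hμ₁pos.ne'] at h1 ⊢
          linear_combination h1
      · intro y₂
        rw [← Finset.sum_div, hScomm]
        have hS' : (∑ y₂' : Y₂, ∑ x₂ : X₂, π ((x₁, x₂), (y₁, y₂'))) ≠ 0 := by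
          rw [← hScomm]; exact hS
        by_cases hνy : ν (y₁, y₂) = 0
        · have hB : (∑ x₂ : X₂, π ((x₁, x₂), (y₁, y₂))) = 0 :=
            le_antisymm (hνy ▸ hBν x₁ y₁ y₂) (hB0 x₁ y₁ y₂)
          rw [hB, zero_div, hνy, zero_div]
        · have h2 := hC2 y₁ y₂ x₁ hνy
          have hνpos : 0 < ν (y₁, y₂) := lt_of_le_of_ne (hν0 _) (Ne.symm hνy)
          have hν₁pos : 0 < ∑ y₂' : Y₂, ν (y₁, y₂') := lt_of_lt_of_le hνpos (hν₁ y₁ y₂)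
          field_simp [hνy, hS', hν₁pos.ne'] at h2 ⊢
          linear_combination h2
  · rintro ⟨-, -, hR3⟩
    constructor
    · intro x₁ x₂ y₁ hμx
      have hμpos : 0 < μ (x₁, x₂) := lt_of_le_of_ne (hμ0 _) (Ne.symm hμx)
      have hμ₁pos : 0 < ∑ x₂' : X₂, μ (x₁, x₂') := lt_of_lt_of_le hμpos (hμ₁ x₁ x₂)
      by_cases hS : (∑ x₂' : X₂, ∑ y₂ : Y₂, π ((x₁, x₂'), (y₁, y₂))) = 0
      · have hA : (∑ y₂ : Y₂, π ((x₁, x₂), (y₁, y₂))) = 0 :=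
          le_antisymm (hS ▸ hAS x₁ x₂ y₁) (hA0 x₁ x₂ y₁)
        rw [hA, hS, zero_div, zero_div]
      · have h := (hR3 x₁ y₁ hS).1 x₂
        rw [← Finset.sum_div] at h
        field_simp [hμx, hS, hμ₁pos.ne'] at h ⊢
        linear_combination h
    · intro y₁ y₂ x₁ hνy
      have hνpos : 0 < ν (y₁, y₂) := lt_of_le_of_ne (hν0 _) (Ne.symm hνy)
      have hν₁pos : 0 < ∑ y₂' : Y₂, ν (y₁, y₂') := lt_of_lt_of_le hνpos (hν₁ y₁ y₂)
      by_cases hS : (∑ x₂' : X₂, ∑ y₂' : Y₂, π ((x₁, x₂'), (y₁, y₂'))) = 0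
      · have hB : (∑ x₂ : X₂, π ((x₁, x₂), (y₁, y₂))) = 0 :=
          le_antisymm (hS ▸ hBS x₁ y₁ y₂) (hB0 x₁ y₁ y₂)
        rw [hB, ← hScomm, hS, zero_div, zero_div]
      · have h := (hR3 x₁ y₁ hS).2 y₂
        rw [← Finset.sum_div] at h
        rw [← hScomm]
        field_simp [hνy, hS, hν₁pos.ne'] at h ⊢
        linear_combination h
end

section
/- Value iteration bound for the extended DPP with state-dependent costs in the finite discrete case: let all spaces be finite, μ and ν discrete measures, and let c(w, v, x_{1:T}, y_{1:T}) be a state-dependent cost. Define V_T(x_{1:T}, y_{1:T}) = c(x_T, y_T, x_{1:T}, y_{1:T}), b_{t+1} as the conditional expectation of c under the equilibrium continuation kernel, and V_t by the extended DPP recursion V_t(x_{1:t}, y_{1:t}) = min over γ_t ∈ Π(μ(x_{t+1}|x_{1:t}), ν(y_{t+1}|y_{1:t})) of E_{γ_t}[V_{t+1} − b_{t+1}(x_{t+1}, y_{t+1}, ·) + b_{t+1}(x_t, y_t, ·)]. Then any plan π* obtained by concatenating the minimizing one-step kernels satisfies: for every t and every path (x_{1:t}, y_{1:t}), V_t(x_{1:t},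 y_{1:t}) = E_{π*}[c(x_t, y_t, x_{1:T}, y_{1:T}) | x_{1:t}, y_{1:t}], i.e., V_t equals the time-t state-dependent cost functional evaluated at π*. -/
open Finset

attribute [local instance] Classical.propDecidable

namespace EquiTrans15

variable {X Y : Type*}

/-- Two paths agree on their first `t` coordinates. -/
def agree (T t : ℕ) (a b : Fin T → X) : Prop :=
  ∀ s : Fin T, (s : ℕ) < t → a s = b s

/-- Replace the coordinate at time `t` of a path by `ξ`. -/
def upd (T : ℕ) (x : Fin T → X) (t : ℕ) (ξ : X) : Fin T → X :=
  fun s => if (s : ℕ) = t then ξ else x s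

/-- Probability of the cylinder of paths agreeing with `x` on the first `t` coordinates. -/
noncomputable def cyl [Fintype X] (T : ℕ) (μ : (Fin T → X) → ℝ) (t : ℕ)
    (x : Fin T → X) : ℝ :=
  ∑ x' : Fin T → X, if agree T t x x' then μ x' else 0

/-- Probability of the joint cylinder for a plan `π` on pairs of paths. -/
noncomputable def cyl2 [Fintype X] [Fintype Y] (T : ℕ)
    (π : (Fin T → X) → (Fin T → Y) → ℝ) (t : ℕ) (x : Fin T → X) (y : Fin T → Y) : ℝ :=
  ∑ x' : Fin T → X, ∑ y' : Fin T → Y,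
    if agree T t x x' ∧ agree T t y y' then π x' y' else 0

/-- Conditional probability under `π` of the full continuation `(x', y')` given agreement
with `(x, y)` on the first `t` coordinates. -/
noncomputable def condPlan [Fintype X] [Fintype Y] (T : ℕ)
    (π : (Fin T → X) → (Fin T → Y) → ℝ) (t : ℕ) (x : Fin T → X) (y : Fin T → Y)
    (x' : Fin T → X) (y' : Fin T → Y) : ℝ :=
  if agree T t x x' ∧ agree T t y y' then π x' y' / cyl2 T π t x y else 0

/-- One-step conditional kernel of `μ` at time `t` given the first `t` coordinates. -/
noncomputable def stepKer [Fintype X] (T : ℕ) (μ : (Fin T → X) → ℝ) (t : ℕ)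
    (x : Fin T → X) (ξ : X) : ℝ :=
  cyl T μ (t + 1) (upd T x t ξ) / cyl T μ t x

/-- One-step conditional kernel of the plan `π` at time `t`. -/
noncomputable def stepKer2 [Fintype X] [Fintype Y] (T : ℕ)
    (π : (Fin T → X) → (Fin T → Y) → ℝ) (t : ℕ) (x : Fin T → X) (y : Fin T → Y)
    (ξ : X) (η : Y) : ℝ :=
  cyl2 T π (t + 1) (upd T x t ξ) (upd T y t η) / cyl2 T π t x y

/-- `γ` is a coupling of the probability vectors `α` and `β`. -/
def IsCouplingVec [Fintype X] [Fintype Y] (γ : X → Y → ℝ) (α : X → ℝ) (β : Y → ℝ) : Prop :=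
  (∀ ξ η, 0 ≤ γ ξ η) ∧ (∀ ξ, ∑ η, γ ξ η = α ξ) ∧ (∀ η, ∑ ξ, γ ξ η = β η)

/-- `b_t(w, v, x_{1:t}, y_{1:t})`: conditional expectation of the state-dependent cost
`c(w, v, ·, ·)` under the continuation of the plan `π` given the first `t` coordinates. -/
noncomputable def bFun [Fintype X] [Fintype Y] (T : ℕ)
    (π : (Fin T → X) → (Fin T → Y) → ℝ)
    (c : X → Y → (Fin T → X) → (Fin T → Y) → ℝ) (t : ℕ) (w : X) (v : Y)
    (x : Fin T → X) (y : Fin T → Y) : ℝ :=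
  ∑ x' : Fin T → X, ∑ y' : Fin T → Y, condPlan T π t x y x' y' * c w v x' y'

lemma agree_T_iff_eq {T : ℕ} (x x' : Fin T → X) : agree T T x x' ↔ x = x' := by
  constructor
  · intro h; funext s; exact h s s.isLt
  · rintro rfl; intro s _; rfl

lemma cyl2_T_eq [Fintype X] [Fintype Y] (T : ℕ) (π : (Fin T → X) → (Fin T → Y) → ℝ)
    (x : Fin T → X) (y : Fin T → Y) : cyl2 T π T x y = π x y := by
  unfold cyl2
  simp [agree_T_iff_eq, ite_and, Finset.sum_ite_eq]

lemma upd_self {T t : ℕ} (ht : t < T) (x : Fin T → X) (ξ : X) :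
    upd T x t ξ ⟨t, ht⟩ = ξ := by simp [upd]

lemma agree_succ_upd {T t : ℕ} (ht : t < T) (x x' : Fin T → X) (ξ : X) :
    agree T (t + 1) (upd T x t ξ) x' ↔ (agree T t x x' ∧ x' ⟨t, ht⟩ = ξ) := by
  constructor
  · intro h
    constructor
    · intro s hs
      have := h s (by omega)
      rwa [upd, if_neg (by omega)] at this
    · have := h ⟨t, ht⟩ (by exact Nat.lt_succ_self t)
      rw [upd_self] at this
      exact this.symm
  · rintro ⟨h1, h2⟩ s hs
    by_cases hst : (s : ℕ) = t
    · have : s = ⟨t, ht⟩ := Fin.ext hst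
      rw [this, upd_self, h2]
    · rw [upd, if_neg hst]
      exact h1 s (by omega)

lemma le_cyl2 [Fintype X] [Fintype Y] {T t : ℕ} {π : (Fin T → X) → (Fin T → Y) → ℝ}
    (hπ0 : ∀ x y, 0 ≤ π x y) {x x' : Fin T → X} {y y' : Fin T → Y}
    (h : agree T t x x' ∧ agree T t y y') : π x' y' ≤ cyl2 T π t x y := by
  have hnn : ∀ (a : Fin T → X) (b : Fin T → Y),
      (0:ℝ) ≤ if agree T t x a ∧ agree T t y b then π a b else 0 := by
    intro a b; split
    · exact hπ0 _ _
    · exact le_rfl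
  calc π x' y' = (if agree T t x x' ∧ agree T t y y' then π x' y' else 0) := (if_pos h).symm
    _ ≤ ∑ y'' : Fin T → Y, if agree T t x x' ∧ agree T t y y'' then π x' y'' else 0 :=
        Finset.single_le_sum (f := fun y'' => if agree T t x x' ∧ agree T t y y'' then π x' y'' else 0)
          (fun i _ => hnn x' i) (Finset.mem_univ y')
    _ ≤ cyl2 T π t x y := by
        refine Finset.single_le_sum
          (f := fun x'' => ∑ y'' : Fin T → Y, if agree T t x x'' ∧ agree T t y y'' then π x'' y'' else 0)
          (fun i _ => Finset.sum_nonneg fun j _ => hnn i j) (Finset.mem_univ x')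

lemma sum4_swap {A B C D : Type*} [Fintype A] [Fintype B] [Fintype C] [Fintype D]
    (f : A → B → C → D → ℝ) :
    ∑ a, ∑ b, ∑ c, ∑ d, f a b c d = ∑ c, ∑ d, ∑ a, ∑ b, f a b c d :=
  calc ∑ a, ∑ b, ∑ c, ∑ d, f a b c d
      = ∑ a, ∑ c, ∑ b, ∑ d, f a b c d :=
        Finset.sum_congr rfl fun a _ => Finset.sum_comm
    _ = ∑ c, ∑ a, ∑ d, ∑ b, f a b c d := by
        rw [Finset.sum_comm]
        exact Finset.sum_congr rfl fun c _ => Finset.sum_congr rfl fun a _ => Finset.sum_comm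
    _ = ∑ c, ∑ d, ∑ a, ∑ b, f a b c d :=
        Finset.sum_congr rfl fun c _ => Finset.sum_comm

/-- The one-step chain rule for conditional plans. -/
lemma chain [Fintype X] [Fintype Y] {T t : ℕ} (ht : t < T)
    {π : (Fin T → X) → (Fin T → Y) → ℝ} (hπ0 : ∀ x y, 0 ≤ π x y)
    {x : Fin T → X} {y : Fin T → Y} (hC : cyl2 T π t x y ≠ 0)
    (x' : Fin T → X) (y' : Fin T → Y) :
    ∑ ξ, ∑ η, stepKer2 T π t x y ξ η *
        condPlan T π (t + 1) (upd T x t ξ) (upd T y t η) x' y'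
      = condPlan T π t x y x' y' := by
  by_cases hA : agree T t x x' ∧ agree T t y y'
  · have hterm : ∀ ξ η, stepKer2 T π t x y ξ η *
        condPlan T π (t + 1) (upd T x t ξ) (upd T y t η) x' y'
        = if x' ⟨t, ht⟩ = ξ ∧ y' ⟨t, ht⟩ = η then π x' y' / cyl2 T π t x y else 0 := by
      intro ξ η
      rw [condPlan]
      by_cases hcond : agree T (t + 1) (upd T x t ξ) x' ∧ agree T (t + 1) (upd T y t η) y'
      · rw [if_pos hcond]
        have hx := (agree_succ_upd ht x x' ξ).mp hcond.1
        have hy := (agree_succ_upd ht y y' η).mp hcond.2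
        rw [if_pos ⟨hx.2, hy.2⟩]
        set A := cyl2 T π (t + 1) (upd T x t ξ) (upd T y t η) with hAdef
        by_cases hAz : A = 0
        · have hle : π x' y' ≤ A := le_cyl2 hπ0 hcond
          have hzero : π x' y' = 0 := le_antisymm (hAz ▸ hle) (hπ0 _ _)
          rw [stepKer2, ← hAdef, hAz, hzero]
          simp
        · rw [stepKer2, ← hAdef]
          field_simp
      · rw [if_neg hcond]
        rw [if_neg, mul_zero]
        intro hcon
        exact hcond ⟨(agree_succ_upd ht x x' ξ).mpr ⟨hA.1, hcon.1⟩,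
          (agree_succ_upd ht y y' η).mpr ⟨hA.2, hcon.2⟩⟩
    simp only [hterm]
    rw [condPlan, if_pos hA]
    simp [ite_and, Finset.sum_ite_eq]
  · have hterm : ∀ ξ η, stepKer2 T π t x y ξ η *
        condPlan T π (t + 1) (upd T x t ξ) (upd T y t η) x' y' = 0 := by
      intro ξ η
      rw [condPlan, if_neg, mul_zero]
      intro hcon
      exact hA ⟨((agree_succ_upd ht x x' ξ).mp hcon.1).1,
        ((agree_succ_upd ht y y' η).mp hcon.2).1⟩
    rw [condPlan, if_neg hA]
    simp [hterm]

/-- Tower property for `bFun`. -/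
lemma tower [Fintype X] [Fintype Y] {T t : ℕ} (ht : t < T)
    {π : (Fin T → X) → (Fin T → Y) → ℝ} (hπ0 : ∀ x y, 0 ≤ π x y)
    {x : Fin T → X} {y : Fin T → Y} (hC : cyl2 T π t x y ≠ 0)
    (c : X → Y → (Fin T → X) → (Fin T → Y) → ℝ) (w : X) (v : Y) :
    ∑ ξ, ∑ η, stepKer2 T π t x y ξ η *
        bFun T π c (t + 1) w v (upd T x t ξ) (upd T y t η)
      = bFun T π c t w v x y := by
  unfold bFun
  calc ∑ ξ, ∑ η, stepKer2 T π t x y ξ η *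
        ∑ x', ∑ y', condPlan T π (t + 1) (upd T x t ξ) (upd T y t η) x' y' * c w v x' y'
      = ∑ ξ, ∑ η, ∑ x', ∑ y', (stepKer2 T π t x y ξ η *
          condPlan T π (t + 1) (upd T x t ξ) (upd T y t η) x' y') * c w v x' y' := by
        simp_rw [Finset.mul_sum, mul_assoc]
    _ = ∑ x', ∑ y', ∑ ξ, ∑ η, (stepKer2 T π t x y ξ η *
          condPlan T π (t + 1) (upd T x t ξ) (upd T y t η) x' y') * c w v x' y' :=
        sum4_swap _
    _ = ∑ x', ∑ y', condPlan T π t x y x' y' * c w v x' y' := by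
        refine Finset.sum_congr rfl fun x' _ => Finset.sum_congr rfl fun y' _ => ?_
        simp_rw [← Finset.sum_mul]
        rw [chain ht hπ0 hC x' y']

/-- Value iteration bound for the extended DPP with state-dependent costs
in the finite discrete case: if V is defined by the extended DPP recursion and the
bi-causal plan π* is obtained by concatenating minimizing one-step kernels, then at every
time t and every path of positive probability, V_t equals the time-t state-dependent cost
functional evaluated at π*. -/
theorem stmt_15 [Fintype X] [Fintype Y] [Nonempty X] [Nonempty Y]
    (T : ℕ) (hT : 0 < T)
    (μ : (Fin T → X) → ℝ) (ν : (Fin T → Y) → ℝ)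
    (π : (Fin T → X) → (Fin T → Y) → ℝ)
    (c : X → Y → (Fin T → X) → (Fin T → Y) → ℝ)
    (V : ℕ → (Fin T → X) → (Fin T → Y) → ℝ)
    (hμ0 : ∀ x, 0 ≤ μ x) (hμ1 : ∑ x, μ x = 1)
    (hν0 : ∀ y, 0 ≤ ν y) (hν1 : ∑ y, ν y = 1)
    (hπ0 : ∀ x y, 0 ≤ π x y) (hπ1 : ∑ x, ∑ y, π x y = 1)
    (hπX : ∀ x, ∑ y, π x y = μ x) (hπY : ∀ y, ∑ x, π x y = ν y)
    -- bi-causality of π*: all one-step conditional kernels are couplings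
    (hbc : ∀ t, t < T → ∀ x y, cyl2 T π t x y ≠ 0 →
      IsCouplingVec (stepKer2 T π t x y) (stepKer T μ t x) (stepKer T ν t y))
    -- boundary condition
    (hVT : ∀ x y, V T x y = c (x ⟨T - 1, by omega⟩) (y ⟨T - 1, by omega⟩) x y)
    -- extended DPP recursion: V t is the minimum of the one-step objective
    (hrec : ∀ t (ht0 : 0 < t) (htT : t < T), ∀ x y, cyl2 T π t x y ≠ 0 →
      IsLeast
        {r : ℝ | ∃ γ : X → Y → ℝ,
          IsCouplingVec γ (stepKer T μ t x) (stepKer T ν t y) ∧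
          r = ∑ ξ, ∑ η, γ ξ η *
            (V (t + 1) (upd T x t ξ) (upd T y t η)
              - bFun T π c (t + 1) ξ η (upd T x t ξ) (upd T y t η)
              + bFun T π c (t + 1) (x ⟨t - 1, by omega⟩) (y ⟨t - 1, by omega⟩)
                  (upd T x t ξ) (upd T y t η))}
        (V t x y))
    -- π* attains the minimum: its one-step kernel realizes the value
    (hopt : ∀ t (ht0 : 0 < t) (htT : t < T), ∀ x y, cyl2 T π t x y ≠ 0 →
      V t x y = ∑ ξ, ∑ η, stepKer2 T π t x y ξ η *
        (V (t + 1) (upd T x t ξ) (upd T y t η)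
          - bFun T π c (t + 1) ξ η (upd T x t ξ) (upd T y t η)
          + bFun T π c (t + 1) (x ⟨t - 1, by omega⟩) (y ⟨t - 1, by omega⟩)
              (upd T x t ξ) (upd T y t η))) :
    ∀ t (ht0 : 0 < t) (htT : t ≤ T), ∀ x y, cyl2 T π t x y ≠ 0 →
      V t x y = ∑ x' : Fin T → X, ∑ y' : Fin T → Y,
        condPlan T π t x y x' y' *
          c (x ⟨t - 1, by omega⟩) (y ⟨t - 1, by omega⟩) x' y' := by
  suffices H : ∀ d t, 0 < t → t + d = T → ∀ x y, cyl2 T π t x y ≠ 0 →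
      ∀ (h1 : t - 1 < T),
      V t x y = bFun T π c t (x ⟨t - 1, h1⟩) (y ⟨t - 1, h1⟩) x y by
    intro t ht0 htT x y h
    exact H (T - t) t ht0 (by omega) x y h (by omega)
  intro d
  induction d with
  | zero =>
    intro t ht0 htd x y h h1
    have hTt : t = T := by omega
    subst hTt
    rw [hVT x y, bFun]
    have : ∀ x' y', condPlan t π t x y x' y' = if x = x' ∧ y = y' then 1 else 0 := by
      intro x' y'
      rw [condPlan]
      simp only [agree_T_iff_eq]
      by_cases hxy : x = x' ∧ y = y'
      · rw [if_pos hxy, if_pos hxy]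
        obtain ⟨rfl, rfl⟩ := hxy
        rw [cyl2_T_eq]
        rw [cyl2_T_eq] at h
        exact div_self h
      · rw [if_neg hxy, if_neg hxy]
    simp only [this]
    simp [ite_and, Finset.sum_ite_eq]
  | succ d ih =>
    intro t ht0 htd x y h h1
    have htT : t < T := by omega
    rw [hopt t ht0 htT x y h]
    have hzero : ∀ ξ η, stepKer2 T π t x y ξ η *
        (V (t + 1) (upd T x t ξ) (upd T y t η)
          - bFun T π c (t + 1) ξ η (upd T x t ξ) (upd T y t η)) = 0 := by
      intro ξ η
      by_cases hK : stepKer2 T π t x y ξ η = 0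
      · rw [hK, zero_mul]
      · have hA : cyl2 T π (t + 1) (upd T x t ξ) (upd T y t η) ≠ 0 := by
          intro hc
          apply hK
          rw [stepKer2, hc, zero_div]
        have hIH := ih (t + 1) (by omega) (by omega) (upd T x t ξ) (upd T y t η) hA
          (by omega)
        have hux : upd T x t ξ ⟨t + 1 - 1, by omega⟩ = ξ := upd_self htT x ξ
        have huy : upd T y t η ⟨t + 1 - 1, by omega⟩ = η := upd_self htT y η
        rw [hux, huy] at hIH
        rw [hIH, sub_self, mul_zero]
    have hsplit : ∀ ξ η, stepKer2 T π t x y ξ η *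
        (V (t + 1) (upd T x t ξ) (upd T y t η)
          - bFun T π c (t + 1) ξ η (upd T x t ξ) (upd T y t η)
          + bFun T π c (t + 1) (x ⟨t - 1, by omega⟩) (y ⟨t - 1, by omega⟩)
              (upd T x t ξ) (upd T y t η))
        = stepKer2 T π t x y ξ η *
            bFun T π c (t + 1) (x ⟨t - 1, by omega⟩) (y ⟨t - 1, by omega⟩)
              (upd T x t ξ) (upd T y t η) := by
      intro ξ η
      rw [mul_add, hzero ξ η, zero_add]
    simp only [hsplit]
    exact tower htT hπ0 h c _ _

end EquiTrans15
end

section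
/- Recursive decomposition of the nonlinear cost functional: in the finite discrete setting, for a bi-causal transport plan of the form π^{t,γ} that uses a one-step coupling γ at time t followed by a fixed bi-causal continuation π, the nonlinear objective J(x_{1:t}, y_{1:t}; π^{t,γ}) = E_{π^{t,γ}}[c] + G(E_{π^{t,γ}}[h]) satisfies J(x_{1:t}, y_{1:t}; π^{t,γ}) = E_γ[J(x_{1:t+1}, y_{1:t+1}; π)] − E_γ[G(g_{t+1}(x_{1:t+1}, y_{1:t+1}))] + G(E_γ[g_{t+1}(x_{1:t+1}, y_{1:t+1})]), where g_{t+1}(x_{1:t+1}, y_{1:t+1}) = E_π[h(x_{1:T}, y_{1:T}) | x_{1:t+1}, y_{1:t+1}] and E_γ denotes expectation of (x_{t+1}, y_{t+1}) under γ. -/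
open Finset

attribute [local instance] Classical.propDecidable

namespace EquiTrans16

variable {X Y : Type*}

/-- Two paths agree on their first `t` coordinates. -/
def agree (T t : ℕ) (a b : Fin T → X) : Prop :=
  ∀ s : Fin T, (s : ℕ) < t → a s = b s

/-- Replace the coordinate at time `t` of a path by `ξ`. -/
def upd (T : ℕ) (x : Fin T → X) (t : ℕ) (ξ : X) : Fin T → X :=
  fun s => if (s : ℕ) = t then ξ else x s

/-- Probability of the joint cylinder for a plan `π` on pairs of paths. -/
noncomputable def cyl2 [Fintype X] [Fintype Y] (T : ℕ)
    (π : (Fin T → X) → (Fin T → Y) → ℝ) (t : ℕ) (x : Fin T → X) (y : Fin T → Y) : ℝ :=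
  ∑ x' : Fin T → X, ∑ y' : Fin T → Y,
    if agree T t x x' ∧ agree T t y y' then π x' y' else 0

/-- Conditional probability under `π` of the full continuation `(x', y')` given agreement
with `(x, y)` on the first `t` coordinates. -/
noncomputable def condPlan [Fintype X] [Fintype Y] (T : ℕ)
    (π : (Fin T → X) → (Fin T → Y) → ℝ) (t : ℕ) (x : Fin T → X) (y : Fin T → Y)
    (x' : Fin T → X) (y' : Fin T → Y) : ℝ :=
  if agree T t x x' ∧ agree T t y y' then π x' y' / cyl2 T π t x y else 0

/-- Conditional expectation of `f` under the continuation of the plan `π` given the first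
`t` coordinates. -/
noncomputable def condExpFun [Fintype X] [Fintype Y] (T : ℕ)
    (π : (Fin T → X) → (Fin T → Y) → ℝ) (f : (Fin T → X) → (Fin T → Y) → ℝ) (t : ℕ)
    (x : Fin T → X) (y : Fin T → Y) : ℝ :=
  ∑ x' : Fin T → X, ∑ y' : Fin T → Y, condPlan T π t x y x' y' * f x' y'

lemma agree_upd_iff (T t : ℕ) (ht : t < T) (x x' : Fin T → X) (ξ : X) :
    agree T (t + 1) (upd T x t ξ) x' ↔ agree T t x x' ∧ x' ⟨t, ht⟩ = ξ := by
  constructor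
  · intro hag
    refine ⟨fun s hs => ?_, ?_⟩
    · have := hag s (Nat.lt_succ_of_lt hs)
      rwa [upd, if_neg (Nat.ne_of_lt hs)] at this
    · have := hag ⟨t, ht⟩ (Nat.lt_succ_self t)
      rw [upd] at this
      simpa using this.symm
  · rintro ⟨h1, h2⟩ s hs
    rcases Nat.lt_succ_iff_lt_or_eq.mp hs with hs' | hs'
    · rw [upd, if_neg (Nat.ne_of_lt hs')]
      exact h1 s hs'
    · have hse : s = ⟨t, ht⟩ := Fin.ext hs'
      subst hse
      rw [upd]
      simp [h2]

lemma agree_iff_of_agree {T t : ℕ} {a a' : Fin T → X} (hag : agree T t a a')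
    (x'' : Fin T → X) : agree T t a x'' ↔ agree T t a' x'' :=
  ⟨fun h2 s hs => (hag s hs).symm.trans (h2 s hs),
   fun h2 s hs => (hag s hs).trans (h2 s hs)⟩

lemma cyl2_congr [Fintype X] [Fintype Y] (T : ℕ)
    (π : (Fin T → X) → (Fin T → Y) → ℝ) (t : ℕ)
    {a a' : Fin T → X} {b b' : Fin T → Y}
    (ha : agree T t a a') (hb : agree T t b b') :
    cyl2 T π t a b = cyl2 T π t a' b' := by
  unfold cyl2
  refine Finset.sum_congr rfl fun x'' _ => Finset.sum_congr rfl fun y'' _ => ?_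
  simp only [agree_iff_of_agree ha x'', agree_iff_of_agree hb y'']

lemma key [Fintype X] [Fintype Y] (T t : ℕ) (ht : t < T)
    (π : (Fin T → X) → (Fin T → Y) → ℝ) (γ : X → Y → ℝ)
    (f : (Fin T → X) → (Fin T → Y) → ℝ) (x : Fin T → X) (y : Fin T → Y) :
    (∑ ξ : X, ∑ η : Y, γ ξ η * condExpFun T π f (t + 1) (upd T x t ξ) (upd T y t η))
      = ∑ x' : Fin T → X, ∑ y' : Fin T → Y,
          (if agree T t x x' ∧ agree T t y y' then
            γ (x' ⟨t, ht⟩) (y' ⟨t, ht⟩) * (π x' y' / cyl2 T π (t + 1) x' y') else 0)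
            * f x' y' := by
  unfold condExpFun
  simp only [Finset.mul_sum]
  conv_lhs => enter [2, ξ]; rw [Finset.sum_comm]
  conv_lhs => rw [Finset.sum_comm]
  conv_lhs => enter [2, x', 2, ξ]; rw [Finset.sum_comm]
  conv_lhs => enter [2, x']; rw [Finset.sum_comm]
  refine Finset.sum_congr rfl fun x' _ => Finset.sum_congr rfl fun y' _ => ?_
  by_cases hx : agree T t x x' ∧ agree T t y y'
  · rw [if_pos hx]
    have hcp : ∀ ξ η, condPlan T π (t + 1) (upd T x t ξ) (upd T y t η) x' y'
        = if ξ = x' ⟨t, ht⟩ ∧ η = y' ⟨t, ht⟩ then π x' y' / cyl2 T π (t + 1) x' y'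
          else 0 := by
      intro ξ η
      unfold condPlan
      by_cases hcnd : ξ = x' ⟨t, ht⟩ ∧ η = y' ⟨t, ht⟩
      · obtain ⟨hξ, hη⟩ := hcnd
        have hax : agree T (t + 1) (upd T x t ξ) x' :=
          (agree_upd_iff T t ht x x' ξ).mpr ⟨hx.1, hξ.symm⟩
        have hay : agree T (t + 1) (upd T y t η) y' :=
          (agree_upd_iff T t ht y y' η).mpr ⟨hx.2, hη.symm⟩
        rw [if_pos ⟨hax, hay⟩, if_pos ⟨hξ, hη⟩, cyl2_congr T π (t + 1) hax hay]
      · rw [if_neg, if_neg hcnd]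
        intro hcon
        exact hcnd ⟨((agree_upd_iff T t ht x x' ξ).mp hcon.1).2.symm,
          ((agree_upd_iff T t ht y y' η).mp hcon.2).2.symm⟩
    simp only [hcp]
    simp [ite_and, mul_ite, mul_zero, ite_mul, zero_mul, Finset.sum_ite_eq',
      mul_assoc]
  · rw [if_neg hx, zero_mul]
    refine (Finset.sum_eq_zero fun ξ _ => Finset.sum_eq_zero fun η _ => ?_)
    unfold condPlan
    rw [if_neg, zero_mul, mul_zero]
    intro hcon
    exact hx ⟨((agree_upd_iff T t ht x x' ξ).mp hcon.1).1,
      ((agree_upd_iff T t ht y y' η).mp hcon.2).1⟩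

/-- Recursive decomposition of the nonlinear cost functional: for the plan
π^{t,γ} that uses the one-step coupling γ at time t followed by the continuation of the
bi-causal plan π, the nonlinear objective J(x_{1:t}, y_{1:t}; π^{t,γ}) = E[c] + G(E[h])
decomposes as E_γ[J(x_{1:t+1}, y_{1:t+1}; π)] − E_γ[G(g_{t+1})] + G(E_γ[g_{t+1}]),
where g_{t+1} = E_π[h | x_{1:t+1}, y_{1:t+1}]. -/
theorem stmt_16 [Fintype X] [Fintype Y]
    (T t : ℕ) (ht : t < T)
    (π : (Fin T → X) → (Fin T → Y) → ℝ) (hπ0 : ∀ x y, 0 ≤ π x y)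
    (γ : X → Y → ℝ)
    (c h : (Fin T → X) → (Fin T → Y) → ℝ) (G : ℝ → ℝ)
    (x : Fin T → X) (y : Fin T → Y) :
    (∑ x' : Fin T → X, ∑ y' : Fin T → Y,
        (if agree T t x x' ∧ agree T t y y' then
          γ (x' ⟨t, ht⟩) (y' ⟨t, ht⟩) * (π x' y' / cyl2 T π (t + 1) x' y') else 0)
          * c x' y')
      + G (∑ x' : Fin T → X, ∑ y' : Fin T → Y,
          (if agree T t x x' ∧ agree T t y y' then
            γ (x' ⟨t, ht⟩) (y' ⟨t, ht⟩) * (π x' y' / cyl2 T π (t + 1) x' y') else 0)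
            * h x' y')
    = (∑ ξ : X, ∑ η : Y, γ ξ η *
          (condExpFun T π c (t + 1) (upd T x t ξ) (upd T y t η)
            + G (condExpFun T π h (t + 1) (upd T x t ξ) (upd T y t η))))
      - (∑ ξ : X, ∑ η : Y, γ ξ η *
          G (condExpFun T π h (t + 1) (upd T x t ξ) (upd T y t η)))
      + G (∑ ξ : X, ∑ η : Y, γ ξ η *
          condExpFun T π h (t + 1) (upd T x t ξ) (upd T y t η)) := by
  rw [← key T t ht π γ c x y, ← key T t ht π γ h x y]
  simp only [mul_add, Finset.sum_add_distrib]
  ring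

end EquiTrans16
end
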